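/- arXiv:2410.13796 — 2 statements merged into one kernel-verified Lean document; each statement's English description precedes it below -/
import Mathlib

section
/- The sorted vector of distances from a point to its k nearest neighbors is stable under perturbation: if every point of a finite set Q ⊂ ℝⁿ is moved by at most ε to form S (via a bijection f with |q - f(q)| ≤ ε for all q), then for each q ∈ Q the i-th smallest distance from q to other points of Q and the i-th smallest distance from f(q) to other points of S differ by at most 2ε, for all i = 1,…,k. -/
attribute [local instance] Classical.propDecidable
/-- The nondecreasing list of distances from `p` to the points of `T \ {p}`. -/
noncomputable def sortedDists {X : Type*} [MetricSpace X] [DecidableEq X]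
    (T : Finset X) (p : X) : List ℝ :=
  ((T.erase p).val.map (dist p)).sort (· ≤ ·)

/-!
Moving each point by at most `ε` changes each distance `d(q, p)` by at most `2ε`, so the
multisets of distances seen from `q` and from `f q` admit a matching of elements that are
`2ε`-close. Such a matching can always be uncrossed into the order-preserving one: the two minima
may be matched to each other, and induction on the sorted lists does the rest.
-/

section SortedMatching

variable {α : Type*} [AddCommGroup α] [LinearOrder α] [IsOrderedAddMonoid α] {δ : α}

lemma abs_sub_le_of_crossed {a a' b b' : α} (ha : a ≤ a') (hb : b ≤ b')
    (hab' : |a - b'| ≤ δ) (ha'b : |a' - b| ≤ δ) : |a - b| ≤ δ ∧ |a' - b'| ≤ δ := by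
  simp only [abs_sub_le_iff] at hab' ha'b ⊢
  exact ⟨⟨(sub_le_sub_right ha b).trans ha'b.1, (sub_le_sub_right hb a).trans hab'.2⟩,
    ⟨(sub_le_sub_left hb a').trans ha'b.1, (sub_le_sub_left ha b').trans hab'.2⟩⟩

lemma rel_of_rel_cons_cons_of_forall_le {a b : α} {s t : Multiset α}
    (ha : ∀ x ∈ s, a ≤ x) (hb : ∀ y ∈ t, b ≤ y)
    (h : Multiset.Rel (fun x y => |x - y| ≤ δ) (a ::ₘ s) (b ::ₘ t)) :
    |a - b| ≤ δ ∧ Multiset.Rel (fun x y => |x - y| ≤ δ) s t := by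
  obtain ⟨b₁, t₁, hab₁, hst₁, hbt⟩ := Multiset.rel_cons_left.mp h
  rcases Multiset.cons_eq_cons.mp hbt with ⟨rfl, rfl⟩ | ⟨-, u, rfl, rfl⟩
  · exact ⟨hab₁, hst₁⟩
  obtain ⟨a₁, s₁, ha₁b, hs₁u, rfl⟩ := Multiset.rel_cons_right.mp hst₁
  obtain ⟨hab, ha₁b₁⟩ := abs_sub_le_of_crossed (ha a₁ (Multiset.mem_cons_self _ _))
    (hb b₁ (Multiset.mem_cons_self _ _)) hab₁ ha₁b
  exact ⟨hab, hs₁u.cons ha₁b₁⟩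

lemma forall₂_of_rel_of_pairwise {l m : List α} (hl : l.Pairwise (· ≤ ·))
    (hm : m.Pairwise (· ≤ ·))
    (h : Multiset.Rel (fun x y => |x - y| ≤ δ) (l : Multiset α) m) :
    List.Forall₂ (fun x y => |x - y| ≤ δ) l m := by
  induction l generalizing m with
  | nil => simpa [Multiset.rel_zero_left] using h
  | cons a l ih =>
    cases m with
    | nil => simp [Multiset.rel_zero_right] at h
    | cons b m =>
      rw [List.pairwise_cons] at hl hm
      rw [← Multiset.cons_coe, ← Multiset.cons_coe] at h
      obtain ⟨hab, hlm⟩ := rel_of_rel_cons_cons_of_forall_le (fun x hx => hl.1 x hx)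
        (fun y hy => hm.1 y hy) h
      exact .cons hab (ih hl.2 hm.2 hlm)

lemma forall₂_sort_of_rel {s t : Multiset α}
    (h : Multiset.Rel (fun x y => |x - y| ≤ δ) s t) :
    List.Forall₂ (fun x y => |x - y| ≤ δ) (s.sort (· ≤ ·)) (t.sort (· ≤ ·)) :=
  forall₂_of_rel_of_pairwise (Multiset.pairwise_sort _ _) (Multiset.pairwise_sort _ _)
    (by rwa [Multiset.sort_eq, Multiset.sort_eq])

end SortedMatching

lemma forall₂_sortedDists_image {X : Type*} [MetricSpace X] [DecidableEq X] {T : Finset X}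
    {f : X → X} (hf : Set.InjOn f T) {ε : ℝ} (hmove : ∀ p ∈ T, dist p (f p) ≤ ε)
    {q : X} (hq : q ∈ T) :
    List.Forall₂ (fun x y => |x - y| ≤ 2 * ε)
      (sortedDists T q) (sortedDists (T.image f) (f q)) := by
  have hval : ((T.image f).erase (f q)).val = (T.erase q).val.map f := by
    rw [Finset.erase_val, Finset.image_val_of_injOn hf, Finset.erase_val,
      Multiset.map_erase_of_mem _ _ hq]
  unfold sortedDists
  rw [hval, Multiset.map_map]
  refine forall₂_sort_of_rel (Multiset.rel_map.mpr (Multiset.rel_refl_of_refl_on fun p hp => ?_))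
  calc |dist q p - dist (f q) (f p)| = dist (dist q p) (dist (f q) (f p)) := rfl
    _ ≤ dist q (f q) + dist p (f p) := dist_dist_dist_le _ _ _ _
    _ ≤ 2 * ε := by linarith [hmove q hq, hmove p (Finset.mem_of_mem_erase hp)]

theorem sorted_dists_perturbation_stability_general {n : ℕ}
    (Q : Finset (EuclideanSpace ℝ (Fin n))) (k : ℕ) (hk : k + 1 ≤ Q.card)
    (f : EuclideanSpace ℝ (Fin n) → EuclideanSpace ℝ (Fin n))
    (hf : Set.InjOn f ↑Q) (S : Finset (EuclideanSpace ℝ (Fin n))) (hS : S = Q.image f)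
    (ε : ℝ) (hmove : ∀ q ∈ Q, dist q (f q) ≤ ε) :
    ∀ q ∈ Q, ∀ i < k, |(sortedDists Q q)[i]! - (sortedDists S (f q))[i]!| ≤ 2 * ε := by
  intro q hq i hi
  subst hS
  have hmatch := forall₂_sortedDists_image hf hmove hq
  have hlen : (sortedDists Q q).length = Q.card - 1 := by
    rw [sortedDists, Multiset.length_sort, Multiset.card_map, ← Finset.card_def,
      Finset.card_erase_of_mem hq]
  have hi₁ : i < (sortedDists Q q).length := by omega
  have hi₂ : i < (sortedDists (Q.image f) (f q)).length := hmatch.length_eq ▸ hi₁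
  rw [getElem!_pos _ i hi₁, getElem!_pos _ i hi₂]
  exact hmatch.get hi₁ hi₂

/-- Stability of sorted neighbor distances: if every point of a finite set `Q ⊂ ℝⁿ` is moved
by at most `ε` (via a map `f` injective on `Q`, with image `S`), then for each `q ∈ Q` and each
`i < k`, the `i`-th smallest distance from `q` to the other points of `Q` and the `i`-th smallest
distance from `f q` to the other points of `S` differ by at most `2ε`. -/
theorem sorted_dists_perturbation_stability {n : ℕ}
    (Q : Finset (EuclideanSpace ℝ (Fin n))) (k : ℕ) (hk : k + 1 ≤ Q.card)
    (f : EuclideanSpace ℝ (Fin n) → EuclideanSpace ℝ (Fin n))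
    (hf : Set.InjOn f ↑Q) (S : Finset (EuclideanSpace ℝ (Fin n))) (hS : S = Q.image f)
    (ε : ℝ) (hε : 0 ≤ ε) (hmove : ∀ q ∈ Q, dist q (f q) ≤ ε) :
    ∀ q ∈ Q, ∀ i < k, |(sortedDists Q q)[i]! - (sortedDists S (f q))[i]!| ≤ 2 * ε :=
  sorted_dists_perturbation_stability_general Q k hk f hf S hS ε hmove
end

section
/- Local Novelty Distance upper bound (Theorem 1, first part, finite version): let D be a finite dataset of finite point sets in ℝⁿ, each with m points, and define LND(S; D) = min over Q ∈ D of EMD between the distributions of sorted k-nearest-neighbor distance vectors (with uniform weights 1/m). If S is obtained from some Q ∈ D by perturbing every point by at most ε, where 2ε is less than the minimum inter-point distance of Q, then LND(S; D) ≤ 2ε. -/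
/-!
Match each `q ∈ Q` with `f q ∈ S`, moving mass `1 / |Q|` along the bijection. Moving every
point by at most `ε` changes every pairwise distance by at most `2ε`, and sorting is
`1`-Lipschitz for the sup distance, because `l[i] ≤ x` holds for a sorted list `l` exactly when
more than `i` entries of `l` are `≤ x`. Hence matched rows are `2ε`-close in `L∞`, this transport
plan costs at most `2ε`, and `LND(S; D) ≤ EMD(S, Q) ≤ 2ε`.
-/

attribute [local instance] Classical.propDecidable

/-- The row of `p` in `PDD(T; k)`: the sorted vector of the `k` smallest distances from
`p` to the other points of `T`, viewed as a point of `ℝᵏ` with the `L∞` metric. -/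
noncomputable def row {X : Type*} [MetricSpace X] [DecidableEq X]
    (k : ℕ) (T : Finset X) (p : X) : Fin k → ℝ :=
  fun i => (sortedDists T p)[(i : ℕ)]!

/-- The Earth Mover's Distance between the uniformly weighted distributions of
`PDD` rows of the finite sets `S` and `Q`, rows compared in the `L∞` metric on `ℝᵏ`. -/
noncomputable def PDDdist {X : Type*} [MetricSpace X] [DecidableEq X]
    (k : ℕ) (S Q : Finset X) : ℝ :=
  sInf {s | ∃ f : X → X → ℝ, (∀ p q, 0 ≤ f p q) ∧
    (∀ p ∈ S, ∑ q ∈ Q, f p q = 1 / S.card) ∧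
    (∀ q ∈ Q, ∑ p ∈ S, f p q = 1 / Q.card) ∧
    s = ∑ p ∈ S, ∑ q ∈ Q, f p q * dist (row k S p) (row k Q q)}

/-- Local Novelty Distance of `S` with respect to a finite dataset `D`. -/
noncomputable def LND {X : Type*} [MetricSpace X] [DecidableEq X]
    (k : ℕ) (S : Finset X) (D : Finset (Finset X)) : ℝ :=
  sInf {d | ∃ Q ∈ D, d = PDDdist k S Q}

namespace List

variable {α : Type*} [LinearOrder α]

theorem SortedLE.getElem_le_iff_lt_countP {l : List α} (hl : l.SortedLE) {i : ℕ}
    (hi : i < l.length) (x : α) : l[i] ≤ x ↔ i < l.countP (· ≤ x) := by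
  constructor
  · intro hix
    have htake : (l.take (i + 1)).countP (· ≤ x) = i + 1 := by
      rw [countP_eq_length.mpr, length_take_of_le hi]
      intro y hy
      obtain ⟨j, hj, rfl⟩ := getElem_of_mem hy
      simp only [getElem_take, decide_eq_true_eq]
      exact (hl.getElem_le_getElem_of_le (by rw [length_take] at hj; omega)).trans hix
    calc i < i + 1 := i.lt_succ_self
      _ = (l.take (i + 1)).countP (· ≤ x) := htake.symm
      _ ≤ l.countP (· ≤ x) := (take_prefix _ _).countP_le
  · intro hcount
    by_contra! hxi
    have hdrop : (l.drop i).countP (· ≤ x) = 0 := by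
      rw [countP_eq_zero]
      intro y hy
      obtain ⟨j, hj, rfl⟩ := getElem_of_mem hy
      simp only [getElem_drop, decide_eq_true_eq, not_le]
      exact hxi.trans_le (hl.getElem_le_getElem_of_le (by omega))
    have htake := (l.take i).countP_le_length (p := (· ≤ x))
    rw [length_take] at htake
    rw [← take_append_drop i l, countP_append, hdrop] at hcount
    omega

end List

namespace Multiset

theorem countP_le_countP_of_imp {β : Type*} {s : Multiset β} {p q : β → Prop} [DecidablePred p]
    [DecidablePred q] (h : ∀ x ∈ s, p x → q x) : s.countP p ≤ s.countP q := by
  induction s using Quotient.inductionOn with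
  | _ l => simpa using List.countP_mono_left (by simpa using h)

variable {ι α : Type*} [LinearOrder α]

theorem countP_sort (s : Multiset α) (p : α → Prop) [DecidablePred p] :
    (s.sort (· ≤ ·)).countP (p ·) = s.countP p := by
  conv_rhs => rw [← s.sort_eq (· ≤ ·)]
  rw [coe_countP]

theorem sort_map_getElem_le_of_le_comp {u : Multiset ι} {a b : ι → α} {g : α → α}
    (hg : Monotone g) (h : ∀ x ∈ u, a x ≤ g (b x)) {i : ℕ} (hi : i < card u) :
    ((u.map a).sort (· ≤ ·))[i]'(by simpa using hi) ≤
      g (((u.map b).sort (· ≤ ·))[i]'(by simpa using hi)) := by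
  set y := ((u.map b).sort (· ≤ ·))[i]'(by simpa using hi)
  have sorted (c : ι → α) : ((u.map c).sort (· ≤ ·)).SortedLE := (pairwise_sort _ _).sortedLE
  have hb := ((sorted b).getElem_le_iff_lt_countP (by simpa using hi) y).mp le_rfl
  rw [(sorted a).getElem_le_iff_lt_countP, countP_sort, countP_map, ← countP_eq_card_filter]
  rw [countP_sort, countP_map, ← countP_eq_card_filter] at hb
  exact hb.trans_le (countP_le_countP_of_imp fun x hx hbx => (h x hx).trans (hg hbx))

theorem dist_sort_map_getElem!_le {u : Multiset ι} {a b : ι → ℝ} {δ : ℝ} (hδ : 0 ≤ δ)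
    (h : ∀ x ∈ u, dist (a x) (b x) ≤ δ) (i : ℕ) :
    dist ((u.map a).sort (· ≤ ·))[i]! ((u.map b).sort (· ≤ ·))[i]! ≤ δ := by
  by_cases hi : i < card u
  · have hshift : Monotone (· + δ) := monotone_id.add_const δ
    rw [getElem!_pos _ _ (by simpa using hi), getElem!_pos _ _ (by simpa using hi),
      Real.dist_eq, abs_sub_le_iff, sub_le_iff_le_add', sub_le_iff_le_add']
    simp only [Real.dist_eq, abs_sub_le_iff] at h
    exact ⟨sort_map_getElem_le_of_le_comp (a := a) (b := b) hshift
        (fun x hx => by linarith [h x hx]) hi,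
      sort_map_getElem_le_of_le_comp (a := b) (b := a) hshift
        (fun x hx => by linarith [h x hx]) hi⟩
  · -- past the end both lists return the junk default `0`
    rw [getElem!_neg _ _ (by simpa using hi), getElem!_neg _ _ (by simpa using hi), dist_self]
    exact hδ

end Multiset

theorem Finset.image_erase_of_injOn {α β : Type*} [DecidableEq α] [DecidableEq β] {f : α → β}
    {s : Finset α} (hf : Set.InjOn f s) {a : α} (ha : a ∈ s) :
    (s.image f).erase (f a) = (s.erase a).image f := by
  ext y
  simp only [mem_erase, mem_image]
  constructor
  · rintro ⟨hne, x, hx, rfl⟩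
    exact ⟨x, ⟨fun h => hne (h ▸ rfl), hx⟩, rfl⟩
  · rintro ⟨x, ⟨hxa, hx⟩, rfl⟩
    exact ⟨fun h => hxa (hf hx ha h), x, hx, rfl⟩

theorem sortedDists_image {X Y : Type*} [DecidableEq X] [MetricSpace Y] [DecidableEq Y]
    {T : Finset X} {f : X → Y} (hf : Set.InjOn f T) {p : X} (hp : p ∈ T) :
    sortedDists (T.image f) (f p) =
      ((T.erase p).val.map fun x => dist (f p) (f x)).sort (· ≤ ·) := by
  rw [sortedDists, Finset.image_erase_of_injOn hf hp,
    Finset.image_val_of_injOn (hf.mono (T.erase_subset p)), Multiset.map_map]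
  rfl

theorem dist_row_image_le {X Y : Type*} [MetricSpace X] [DecidableEq X] [MetricSpace Y]
    [DecidableEq Y] (k : ℕ) {T : Finset X} {f : X → Y} (hf : Set.InjOn f T) {δ : ℝ} (hδ : 0 ≤ δ)
    (hdist : ∀ x ∈ T, ∀ y ∈ T, dist (dist (f x) (f y)) (dist x y) ≤ δ) {p : X} (hp : p ∈ T) :
    dist (row k (T.image f) (f p)) (row k T p) ≤ δ := by
  rw [dist_pi_le_iff hδ]
  intro i
  simp only [row, sortedDists_image hf hp]
  exact Multiset.dist_sort_map_getElem!_le hδ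
    (fun x hx => hdist p hp x (Finset.mem_erase.mp hx).2) i

theorem dist_dist_le_of_forall_dist_le {X : Type*} [PseudoMetricSpace X] {T : Set X} {f : X → X}
    {ε : ℝ} (hmove : ∀ x ∈ T, dist x (f x) ≤ ε) {x y : X} (hx : x ∈ T) (hy : y ∈ T) :
    dist (dist (f x) (f y)) (dist x y) ≤ 2 * ε := by
  calc dist (dist (f x) (f y)) (dist x y) ≤ dist (f x) x + dist (f y) y :=
        dist_dist_dist_le _ _ _ _
    _ ≤ 2 * ε := by rw [dist_comm (f x), dist_comm (f y)]; linarith [hmove x hx, hmove y hy]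

section Transport

variable {X : Type*} [MetricSpace X] [DecidableEq X] (k : ℕ) {S Q : Finset X}

theorem PDDdist_le_cost {g : X → X → ℝ} (hg : ∀ p q, 0 ≤ g p q)
    (hrow : ∀ p ∈ S, ∑ q ∈ Q, g p q = 1 / S.card) (hcol : ∀ q ∈ Q, ∑ p ∈ S, g p q = 1 / Q.card) :
    PDDdist k S Q ≤ ∑ p ∈ S, ∑ q ∈ Q, g p q * dist (row k S p) (row k Q q) := by
  refine csInf_le ⟨0, ?_⟩ ⟨g, hg, hrow, hcol, rfl⟩
  rintro s ⟨g', hg', -, -, rfl⟩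
  exact Finset.sum_nonneg fun p _ => Finset.sum_nonneg fun q _ => mul_nonneg (hg' p q) dist_nonneg

theorem PDDdist_nonneg : 0 ≤ PDDdist k S Q := by
  refine Real.sInf_nonneg ?_
  rintro s ⟨g, hg, -, -, rfl⟩
  exact Finset.sum_nonneg fun p _ => Finset.sum_nonneg fun q _ => mul_nonneg (hg p q) dist_nonneg

theorem LND_le_PDDdist {D : Finset (Finset X)} (hQ : Q ∈ D) : LND k S D ≤ PDDdist k S Q := by
  refine csInf_le ⟨0, ?_⟩ ⟨Q, hQ, rfl⟩
  rintro d ⟨Q', -, rfl⟩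
  exact PDDdist_nonneg k

theorem PDDdist_image_le {f : X → X} (hf : Set.InjOn f Q) {c : ℝ} (hc : 0 ≤ c)
    (h : ∀ q ∈ Q, dist (row k (Q.image f) (f q)) (row k Q q) ≤ c) :
    PDDdist k (Q.image f) Q ≤ c := by
  set w : ℝ := 1 / Q.card
  set g : X → X → ℝ := fun p q => if p = f q then w else 0
  have hrow : ∀ p ∈ Q.image f, ∑ q ∈ Q, g p q = 1 / (Q.image f).card := by
    intro p hp
    obtain ⟨q₀, hq₀, rfl⟩ := Finset.mem_image.mp hp
    rw [Finset.card_image_of_injOn hf, Finset.sum_eq_single_of_mem q₀ hq₀]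
    · exact if_pos rfl
    · exact fun q hq hne => if_neg fun h => hne (hf hq hq₀ h.symm)
  have hcol : ∀ q ∈ Q, ∑ p ∈ Q.image f, g p q = 1 / Q.card := by
    intro q hq
    simp only [g, Finset.sum_ite_eq', Finset.mem_image_of_mem f hq, if_true, w]
  calc PDDdist k (Q.image f) Q
      ≤ ∑ p ∈ Q.image f, ∑ q ∈ Q, g p q * dist (row k (Q.image f) p) (row k Q q) :=
        PDDdist_le_cost k (fun p q => by positivity) hrow hcol
    _ = ∑ q ∈ Q, w * dist (row k (Q.image f) (f q)) (row k Q q) := by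
        rw [Finset.sum_comm]
        refine Finset.sum_congr rfl fun q hq => ?_
        simp only [g, ite_mul, zero_mul, Finset.sum_ite_eq', Finset.mem_image_of_mem f hq, if_true]
    _ ≤ ∑ q ∈ Q, w * c := Finset.sum_le_sum fun q hq => by gcongr; exact h q hq
    _ ≤ c := by
        rcases Q.eq_empty_or_nonempty with rfl | hne
        · simpa using hc
        · rw [Finset.sum_const, nsmul_eq_mul, ← mul_assoc, mul_one_div_cancel (by positivity), one_mul]

end Transport

theorem LND_upper_bound_general {n : ℕ} (k : ℕ)
    (D : Finset (Finset (EuclideanSpace ℝ (Fin n))))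
    (Q : Finset (EuclideanSpace ℝ (Fin n))) (hQ : Q ∈ D)
    (S : Finset (EuclideanSpace ℝ (Fin n)))
    (f : EuclideanSpace ℝ (Fin n) → EuclideanSpace ℝ (Fin n))
    (hf : Set.InjOn f ↑Q) (hS : S = Q.image f)
    (ε : ℝ) (hε : 0 ≤ ε) (hmove : ∀ q ∈ Q, dist q (f q) ≤ ε) :
    LND k S D ≤ 2 * ε := by
  subst hS
  have hrows : ∀ q ∈ Q, dist (row k (Q.image f) (f q)) (row k Q q) ≤ 2 * ε := fun q hq =>
    dist_row_image_le k hf (by positivity)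
      (fun x hx y hy => dist_dist_le_of_forall_dist_le hmove hx hy) hq
  exact (LND_le_PDDdist k hQ).trans (PDDdist_image_le k hf (by positivity) hrows)

/-- Local Novelty Distance upper bound (finite version): if `S` is obtained from some
`Q` in the dataset `D` by perturbing every point by at most `ε`, where `2ε` is less than
the minimum inter-point distance of `Q`, then `LND(S; D) ≤ 2ε`. -/
theorem LND_upper_bound {n : ℕ} (m k : ℕ) (hm : k + 1 ≤ m)
    (D : Finset (Finset (EuclideanSpace ℝ (Fin n))))
    (hcard : ∀ T ∈ D, T.card = m)
    (Q : Finset (EuclideanSpace ℝ (Fin n))) (hQ : Q ∈ D)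
    (S : Finset (EuclideanSpace ℝ (Fin n))) (hScard : S.card = m)
    (f : EuclideanSpace ℝ (Fin n) → EuclideanSpace ℝ (Fin n))
    (hf : Set.InjOn f ↑Q) (hS : S = Q.image f)
    (ε : ℝ) (hε : 0 ≤ ε) (hmove : ∀ q ∈ Q, dist q (f q) ≤ ε)
    (hsep : ∀ q₁ ∈ Q, ∀ q₂ ∈ Q, q₁ ≠ q₂ → 2 * ε < dist q₁ q₂) :
    LND k S D ≤ 2 * ε :=
  LND_upper_bound_general k D Q hQ S f hf hS ε hε hmove
end
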